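/- arXiv:2007.13818 — 2 statements merged into one kernel-verified Lean document; each statement's English description precedes it below -/
import Mathlib

section
/- Let ρ be a positive definite density operator on an r-dimensional Hilbert space with eigenvalues λ_1 ≤ … ≤ λ_r (all positive). Let X be a Hermitian operator with eigenvalues x_1 ≤ … ≤ x_r satisfying x_1 ≥ −1 and tr(ρX) ≤ 0. Then x_r ≤ (r−1)·λ_r/λ_1. -/
open Matrix BigOperators ComplexOrder

/-!
Diagonalize `X = U diag(x) U*`. Then `tr(ρX) = ∑ⱼ μⱼ xⱼ` with `μⱼ = (U*ρU)ⱼⱼ`, and these diagonal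
entries of a unitary conjugate of `ρ` lie in `[λ₁, λ_r]` because `λ₁ ≤ ρ ≤ λ_r` in the Loewner
order. If `xᵢ > 0`, then `λ₁ xᵢ ≤ μᵢ xᵢ ≤ -∑_{j ≠ i} μⱼ xⱼ ≤ ∑_{j ≠ i} μⱼ ≤ (r - 1) λ_r`,
since every `xⱼ ≥ -1`.
-/

lemma Unitary.star_mul_algebraMap_mul {R A : Type*} [CommSemiring R] [Semiring A] [StarMul A]
    [Algebra R A] (U : unitary A) (c : R) :
    star (U : A) * algebraMap R A c * U = algebraMap R A c := by
  rw [← Algebra.commutes, mul_assoc, Unitary.coe_star_mul_self, mul_one]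

lemma le_of_sum_mul_nonpos {ι : Type*} [Fintype ι] {μ x : ι → ℝ} {a b : ℝ} (ha : 0 < a)
    (hμa : ∀ j, a ≤ μ j) (hμb : ∀ j, μ j ≤ b) (hx : ∀ j, -1 ≤ x j)
    (hsum : ∑ j, μ j * x j ≤ 0) (i : ι) :
    x i ≤ (Fintype.card ι - 1) * b / a := by
  classical
  rcases le_or_gt (x i) 0 with hxi | hxi
  · have hcard : (1 : ℝ) ≤ Fintype.card ι := by exact_mod_cast Fintype.card_pos_iff.mpr ⟨i⟩
    exact hxi.trans (div_nonneg (mul_nonneg (by linarith) (by linarith [hμa i, hμb i])) ha.le)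
  have hrest : -∑ j ∈ Finset.univ.erase i, μ j * x j ≤ (Fintype.card ι - 1) * b := by
    rw [← Finset.sum_neg_distrib, ← Finset.card_univ,
      ← Finset.cast_card_erase_of_mem (Finset.mem_univ i), ← nsmul_eq_mul]
    refine Finset.sum_le_card_nsmul _ _ _ fun j _ => ?_
    nlinarith [hx j, hμb j, ha.trans_le (hμa j)]
  rw [le_div_iff₀ ha, mul_comm]
  calc a * x i ≤ μ i * x i := mul_le_mul_of_nonneg_right (hμa i) hxi.le
    _ ≤ -∑ j ∈ Finset.univ.erase i, μ j * x j := by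
      linarith [Finset.add_sum_erase Finset.univ (fun j => μ j * x j) (Finset.mem_univ i)]
    _ ≤ _ := hrest

namespace Matrix

open scoped MatrixOrder

variable {𝕜 n : Type*} [RCLike 𝕜]

lemma re_diag_le_of_le {A B : Matrix n n 𝕜} (h : A ≤ B) (j : n) :
    RCLike.re (A j j) ≤ RCLike.re (B j j) := by
  have : 0 ≤ (B - A) j j := (le_iff.mp h).diag_nonneg
  rw [sub_apply, sub_nonneg] at this
  exact (RCLike.le_iff_re_im.mp this).1

variable [Fintype n] [DecidableEq n]

lemma IsHermitian.le_algebraMap_of_eigenvalues_le {A : Matrix n n 𝕜} (hA : A.IsHermitian)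
    {c : ℝ} (h : ∀ i, hA.eigenvalues i ≤ c) : A ≤ algebraMap ℝ _ c :=
  le_algebraMap_of_spectrum_le (by
    rw [hA.spectrum_real_eq_range_eigenvalues]
    rintro _ ⟨i, rfl⟩
    exact h i) hA

lemma IsHermitian.algebraMap_le_of_le_eigenvalues {A : Matrix n n 𝕜} (hA : A.IsHermitian)
    {c : ℝ} (h : ∀ i, c ≤ hA.eigenvalues i) : algebraMap ℝ _ c ≤ A :=
  algebraMap_le_of_le_spectrum (by
    rw [hA.spectrum_real_eq_range_eigenvalues]
    rintro _ ⟨i, rfl⟩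
    exact h i) hA

lemma IsHermitian.re_unitary_conj_diag_le {A : Matrix n n 𝕜} (hA : A.IsHermitian)
    (U : unitary (Matrix n n 𝕜)) {c : ℝ} (h : ∀ i, hA.eigenvalues i ≤ c) (j : n) :
    RCLike.re ((star (U : Matrix n n 𝕜) * A * U) j j) ≤ c := by
  have := re_diag_le_of_le (star_left_conjugate_le_conjugate
    (hA.le_algebraMap_of_eigenvalues_le h) (U : Matrix n n 𝕜)) j
  rw [Unitary.star_mul_algebraMap_mul] at this
  simpa [algebraMap_eq_diagonal] using this

lemma IsHermitian.le_re_unitary_conj_diag {A : Matrix n n 𝕜} (hA : A.IsHermitian)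
    (U : unitary (Matrix n n 𝕜)) {c : ℝ} (h : ∀ i, c ≤ hA.eigenvalues i) (j : n) :
    c ≤ RCLike.re ((star (U : Matrix n n 𝕜) * A * U) j j) := by
  have := re_diag_le_of_le (star_left_conjugate_le_conjugate
    (hA.algebraMap_le_of_le_eigenvalues h) (U : Matrix n n 𝕜)) j
  rw [Unitary.star_mul_algebraMap_mul] at this
  simpa [algebraMap_eq_diagonal] using this

lemma IsHermitian.trace_mul_eq_sum_diag_mul_eigenvalues {X : Matrix n n 𝕜} (hX : X.IsHermitian)
    (A : Matrix n n 𝕜) :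
    (A * X).trace = ∑ j, (star (hX.eigenvectorUnitary : Matrix n n 𝕜) * A *
      hX.eigenvectorUnitary) j j * hX.eigenvalues j := by
  conv_lhs =>
    rw [hX.spectral_theorem, Unitary.conjStarAlgAut_apply, ← mul_assoc, trace_mul_cycle,
      ← mul_assoc]
  simp [trace, mul_diagonal]

end Matrix

theorem stmt_2_general {r : ℕ} (hr : 0 < r) (ρ X : Matrix (Fin r) (Fin r) ℂ)
    (hρ : ρ.PosDef) (hX : X.IsHermitian)
    (hx1 : ∀ i, -1 ≤ hX.eigenvalues i)
    (htr : ((ρ * X).trace).re ≤ 0) :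
    haveI : Nonempty (Fin r) := Fin.pos_iff_nonempty.mp hr
    ∀ i, hX.eigenvalues i ≤
      ((r : ℝ) - 1) * (⨆ j, hρ.1.eigenvalues j) / (⨅ j, hρ.1.eigenvalues j) := by
  have : Nonempty (Fin r) := Fin.pos_iff_nonempty.mp hr
  have hfin := Set.finite_range hρ.1.eigenvalues
  obtain ⟨j₀, hj₀⟩ := exists_eq_ciInf_of_finite (f := hρ.1.eigenvalues)
  simpa using le_of_sum_mul_nonpos (hj₀ ▸ hρ.eigenvalues_pos j₀)
    (hρ.1.le_re_unitary_conj_diag hX.eigenvectorUnitary fun j => ciInf_le hfin.bddBelow j)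
    (hρ.1.re_unitary_conj_diag_le hX.eigenvectorUnitary fun j => le_ciSup hfin.bddAbove j)
    hx1 (by simpa [hX.trace_mul_eq_sum_diag_mul_eigenvalues, Complex.re_sum] using htr)

/-- If `ρ` is a positive definite density matrix with smallest eigenvalue `λ₁` and largest
eigenvalue `λ_r`, and `X` is Hermitian with all eigenvalues `≥ −1` and `tr(ρX) ≤ 0`, then
every eigenvalue of `X` (in particular the largest, `x_r`) is `≤ (r−1)·λ_r/λ₁`. -/
theorem stmt_2 {r : ℕ} (hr : 0 < r) (ρ X : Matrix (Fin r) (Fin r) ℂ)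
    (hρ : ρ.PosDef) (htrρ : ρ.trace = 1) (hX : X.IsHermitian)
    (hx1 : ∀ i, -1 ≤ hX.eigenvalues i)
    (htr : ((ρ * X).trace).re ≤ 0) :
    haveI : Nonempty (Fin r) := Fin.pos_iff_nonempty.mp hr
    ∀ i, hX.eigenvalues i ≤
      ((r : ℝ) - 1) * (⨆ j, hρ.1.eigenvalues j) / (⨅ j, hρ.1.eigenvalues j) :=
  stmt_2_general hr ρ X hρ hX hx1 htr
end

section
/- Given a positive definite density matrix ρ with minimal eigenvalue λ_1 > 0 on an r-dimensional Hilbert space, the set of Hermitian operators {X : E([ψ]) + tr([ψ]X) ≥ 0 ∀ pure [ψ], and tr(ρX) ≤ 0} is a compact convex subset of the Hermitian operators, assuming 0 ≤ E ≤ 1. -/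
open Matrix BigOperators ComplexOrder

noncomputable def pureProj {n : ℕ} (ψ : Fin n → ℂ) : Matrix (Fin n) (Fin n) ℂ :=
  Matrix.vecMulVec ψ (star ψ)

/-!
Testing the constraint `E([ψ]) + tr([ψ]X) ≥ 0` on the unit eigenvectors of `X`, with `E ≤ 1`,
gives `X ≥ -1`, so `P = X + 1` is positive semidefinite. As `ρ` is positive definite, `ρ ≥ c`
for some `c > 0`, whence `c · tr P ≤ tr(ρP) = tr(ρX) + 1 ≤ 1`; the entries of a positive
semidefinite matrix are bounded by its trace, so the set is bounded. It is an intersection of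
closed half-spaces of the real vector space of matrices, hence closed and convex.
-/

open scoped MatrixOrder

namespace Matrix

variable {n 𝕜 : Type*} [RCLike 𝕜]

theorem PosSemidef.norm_sq_apply_le {A : Matrix n n 𝕜} (hA : A.PosSemidef) (i j : n) :
    ‖A i j‖ ^ 2 ≤ RCLike.re (A i i) * RCLike.re (A j j) := by
  classical
  have hdet := (hA.submatrix ![i, j]).det_nonneg
  simp only [det_fin_two, submatrix_apply, cons_val_zero, cons_val_one] at hdet
  rw [← hA.1.apply j i, ← hA.1.coe_re_apply_self i, ← hA.1.coe_re_apply_self j,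
    RCLike.star_def, RCLike.mul_conj] at hdet
  exact sub_nonneg.1 (RCLike.ofReal_nonneg (K := 𝕜) |>.1 (by exact_mod_cast hdet))

theorem isCompact_of_isClosed_of_norm_apply_le {m : Type*} [Finite m] [Finite n]
    {S : Set (Matrix m n ℂ)} (hS : IsClosed S) {C : ℝ} (hC : ∀ X ∈ S, ∀ i j, ‖X i j‖ ≤ C) :
    IsCompact S :=
  (isCompact_univ_pi fun _ => isCompact_univ_pi fun _ => isCompact_closedBall 0 C)
    |>.of_isClosed_subset hS fun X hX i _ j _ => mem_closedBall_zero_iff.2 (hC X hX i j)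

variable [Fintype n]

theorem PosSemidef.re_apply_self_le_re_trace {A : Matrix n n 𝕜} (hA : A.PosSemidef) (i : n) :
    RCLike.re (A i i) ≤ RCLike.re A.trace := by
  rw [trace, map_sum]
  exact Finset.single_le_sum (f := fun k => RCLike.re (A k k))
    (fun _ _ => (RCLike.nonneg_iff.1 hA.diag_nonneg).1) (Finset.mem_univ i)

theorem PosSemidef.norm_apply_le_re_trace {A : Matrix n n 𝕜} (hA : A.PosSemidef) (i j : n) :
    ‖A i j‖ ≤ RCLike.re A.trace := by
  have hi := hA.re_apply_self_le_re_trace i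
  have hj := hA.re_apply_self_le_re_trace j
  have hi0 := (RCLike.nonneg_iff.1 (hA.diag_nonneg (i := i))).1
  have hj0 := (RCLike.nonneg_iff.1 (hA.diag_nonneg (i := j))).1
  refine (pow_le_pow_iff_left₀ (norm_nonneg _) (hi0.trans hi) two_ne_zero).1 ?_
  calc ‖A i j‖ ^ 2 ≤ RCLike.re (A i i) * RCLike.re (A j j) := hA.norm_sq_apply_le i j
    _ ≤ RCLike.re A.trace ^ 2 := by rw [sq]; exact mul_le_mul hi hj hj0 (hi0.trans hi)

theorem PosSemidef.trace_mul_nonneg [DecidableEq n] {A B : Matrix n n 𝕜}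
    (hA : A.PosSemidef) (hB : B.PosSemidef) : 0 ≤ (A * B).trace := by
  obtain ⟨S, hS, rfl⟩ : ∃ S : Matrix n n 𝕜, S.IsHermitian ∧ B = S * S :=
    ⟨CFC.sqrt B, (CFC.sqrt_nonneg B).posSemidef.1,
      (CFC.sqrt_mul_sqrt_self B (nonneg_iff_posSemidef.2 hB)).symm⟩
  rw [← mul_assoc, trace_mul_comm, ← mul_assoc]
  nth_rw 1 [← hS.eq]
  exact (hA.conjTranspose_mul_mul_same S).trace_nonneg

theorem trace_mul_le_trace_mul_of_le [DecidableEq n] {A B P : Matrix n n 𝕜}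
    (hAB : A ≤ B) (hP : 0 ≤ P) : (A * P).trace ≤ (B * P).trace := by
  rw [← sub_nonneg, ← trace_sub, ← sub_mul]
  exact PosSemidef.trace_mul_nonneg hAB (nonneg_iff_posSemidef.1 hP)

theorem IsHermitian.algebraMap_le_of_forall_le_re_dotProduct_mulVec [DecidableEq n]
    {A : Matrix n n 𝕜} (hA : A.IsHermitian) {c : ℝ}
    (h : ∀ v : n → 𝕜, star v ⬝ᵥ v = 1 → c ≤ RCLike.re (star v ⬝ᵥ (A *ᵥ v))) :
    algebraMap ℝ _ c ≤ A := by
  rw [algebraMap_le_iff_le_spectrum (p := IsSelfAdjoint) hA.isSelfAdjoint,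
    hA.spectrum_real_eq_range_eigenvalues, Set.forall_mem_range]
  intro i
  rw [hA.eigenvalues_eq]
  refine h _ ?_
  rw [dotProduct_comm, ← EuclideanSpace.inner_eq_star_dotProduct,
    inner_self_eq_norm_sq_to_K, hA.eigenvectorBasis.orthonormal.1 i]
  simp

theorem isLinearMap_re_trace_mul (M : Matrix n n ℂ) :
    IsLinearMap ℝ fun X : Matrix n n ℂ => ((M * X).trace).re where
  map_add X Y := by simp only [mul_add, trace_add, Complex.add_re]
  map_smul c X := by simp only [Matrix.mul_smul, trace_smul, Complex.smul_re]

theorem continuous_re_trace_mul (M : Matrix n n ℂ) :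
    Continuous fun X : Matrix n n ℂ => ((M * X).trace).re := by
  fun_prop

end Matrix

theorem trace_pureProj_mul {r : ℕ} (ψ : Fin r → ℂ) (X : Matrix (Fin r) (Fin r) ℂ) :
    (pureProj ψ * X).trace = star ψ ⬝ᵥ (X *ᵥ ψ) := by
  rw [pureProj, vecMulVec_mul, trace_vecMulVec, dotProduct_comm, dotProduct_mulVec]

section DualFeasible

variable {r : ℕ}

def dualFeasibleSet (ρ : Matrix (Fin r) (Fin r) ℂ) (E : (Fin r → ℂ) → ℝ) :
    Set (Matrix (Fin r) (Fin r) ℂ) :=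
  {X | X.IsHermitian ∧
    (∀ ψ : Fin r → ℂ, star ψ ⬝ᵥ ψ = 1 → 0 ≤ E ψ + ((pureProj ψ * X).trace).re) ∧
    ((ρ * X).trace).re ≤ 0}

theorem dualFeasibleSet_eq (ρ : Matrix (Fin r) (Fin r) ℂ) (E : (Fin r → ℂ) → ℝ) :
    dualFeasibleSet ρ E = {X | IsSelfAdjoint X} ∩
      ((⋂ (ψ : Fin r → ℂ) (_ : star ψ ⬝ᵥ ψ = 1), {X | -E ψ ≤ ((pureProj ψ * X).trace).re}) ∩
        {X | ((ρ * X).trace).re ≤ 0}) := by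
  ext X
  simp only [dualFeasibleSet, Set.mem_ofPred_eq, Set.mem_inter_iff, Set.mem_iInter,
    neg_le_iff_add_nonneg', isHermitian_iff_isSelfAdjoint]

theorem isClosed_dualFeasibleSet (ρ : Matrix (Fin r) (Fin r) ℂ) (E : (Fin r → ℂ) → ℝ) :
    IsClosed (dualFeasibleSet ρ E) := by
  rw [dualFeasibleSet_eq]
  refine (isClosed_eq continuous_star continuous_id).inter
    ((isClosed_iInter fun ψ => isClosed_iInter fun _ => ?_).inter ?_)
  · exact isClosed_le continuous_const (continuous_re_trace_mul _)
  · exact isClosed_le (continuous_re_trace_mul _) continuous_const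

theorem convex_dualFeasibleSet (ρ : Matrix (Fin r) (Fin r) ℂ) (E : (Fin r → ℂ) → ℝ) :
    Convex ℝ (dualFeasibleSet ρ E) := by
  rw [dualFeasibleSet_eq]
  refine (selfAdjoint.submodule ℝ (Matrix (Fin r) (Fin r) ℂ)).convex.inter
    ((convex_iInter fun ψ => convex_iInter fun _ => ?_).inter ?_)
  · exact convex_halfSpace_ge (isLinearMap_re_trace_mul _) _
  · exact convex_halfSpace_le (isLinearMap_re_trace_mul _) _

theorem neg_one_le_of_mem_dualFeasibleSet {ρ : Matrix (Fin r) (Fin r) ℂ} {E : (Fin r → ℂ) → ℝ}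
    (hE : ∀ ψ : Fin r → ℂ, star ψ ⬝ᵥ ψ = 1 → E ψ ≤ 1) {X : Matrix (Fin r) (Fin r) ℂ}
    (hX : X ∈ dualFeasibleSet ρ E) : -1 ≤ X := by
  have := hX.1.algebraMap_le_of_forall_le_re_dotProduct_mulVec (c := -1) fun ψ hψ => by
    have hψX := hX.2.1 ψ hψ
    rw [trace_pureProj_mul] at hψX
    exact (by linarith [hE ψ hψ] : -1 ≤ (star ψ ⬝ᵥ (X *ᵥ ψ)).re)
  simpa using this

theorem norm_apply_le_of_mem_dualFeasibleSet {ρ : Matrix (Fin r) (Fin r) ℂ} (htrρ : ρ.trace = 1)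
    {c : ℝ} (hc : 0 < c) (hcρ : algebraMap ℝ _ c ≤ ρ) {E : (Fin r → ℂ) → ℝ}
    (hE : ∀ ψ : Fin r → ℂ, star ψ ⬝ᵥ ψ = 1 → E ψ ≤ 1) {X : Matrix (Fin r) (Fin r) ℂ}
    (hX : X ∈ dualFeasibleSet ρ E) (i j : Fin r) : ‖X i j‖ ≤ c⁻¹ + 1 := by
  have hP : 0 ≤ X + 1 := neg_le_iff_add_nonneg.1 (neg_one_le_of_mem_dualFeasibleSet hE hX)
  have htrace : c * ((X + 1).trace).re ≤ 1 := by
    have hρX : (ρ * (X + 1)).trace = (ρ * X).trace + 1 := by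
      rw [mul_add, mul_one, trace_add, htrρ]
    have h := Complex.re_le_re (trace_mul_le_trace_mul_of_le hcρ hP)
    rw [Algebra.algebraMap_eq_smul_one, smul_mul, one_mul, trace_smul, Complex.smul_re, hρX,
      Complex.add_re, Complex.one_re, smul_eq_mul] at h
    linarith [hX.2.2]
  have hdiag : ‖(X + 1) i j‖ ≤ c⁻¹ :=
    ((nonneg_iff_posSemidef.1 hP).norm_apply_le_re_trace i j).trans
      (by rw [← one_div, le_div_iff₀' hc]; exact htrace)
  calc ‖X i j‖ = ‖(X + 1) i j - (1 : Matrix (Fin r) (Fin r) ℂ) i j‖ := by simp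
    _ ≤ ‖(X + 1) i j‖ + ‖(1 : Matrix (Fin r) (Fin r) ℂ) i j‖ := norm_sub_le _ _
    _ ≤ c⁻¹ + 1 := add_le_add hdiag (by rw [one_apply]; split_ifs <;> simp)

theorem isCompact_dualFeasibleSet {ρ : Matrix (Fin r) (Fin r) ℂ} (hr : 0 < r) (hρ : ρ.PosDef)
    (htrρ : ρ.trace = 1) {E : (Fin r → ℂ) → ℝ}
    (hE : ∀ ψ : Fin r → ℂ, star ψ ⬝ᵥ ψ = 1 → E ψ ≤ 1) : IsCompact (dualFeasibleSet ρ E) := by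
  have : Nonempty (Fin r) := Fin.pos_iff_nonempty.1 hr
  obtain ⟨c, hc, hcρ⟩ : ∃ c > 0, algebraMap ℝ _ c ≤ ρ :=
    have hρ' := isStrictlyPositive_iff_posDef.2 hρ
    (CFC.exists_pos_algebraMap_le_iff hρ'.isSelfAdjoint).2 fun _ hx => hρ'.spectrum_pos hx
  exact isCompact_of_isClosed_of_norm_apply_le (isClosed_dualFeasibleSet ρ E)
    fun X hX => norm_apply_le_of_mem_dualFeasibleSet htrρ hc hcρ hE hX

end DualFeasible

/-- For a positive definite density matrix `ρ` and `0 ≤ E ≤ 1` on pure states, the set of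
Hermitian `X` that are dual feasible (`E([ψ]) + tr([ψ]X) ≥ 0` for all pure `[ψ]`) and
satisfy `tr(ρX) ≤ 0` is a compact convex subset of the Hermitian operators. -/
theorem stmt_19 {r : ℕ} (hr : 0 < r) (ρ : Matrix (Fin r) (Fin r) ℂ)
    (hρ : ρ.PosDef) (htrρ : ρ.trace = 1) (E : (Fin r → ℂ) → ℝ)
    (hE : ∀ ψ : Fin r → ℂ, star ψ ⬝ᵥ ψ = 1 → 0 ≤ E ψ ∧ E ψ ≤ 1) :
    IsCompact {X : Matrix (Fin r) (Fin r) ℂ | X.IsHermitian ∧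
        (∀ ψ : Fin r → ℂ, star ψ ⬝ᵥ ψ = 1 → 0 ≤ E ψ + ((pureProj ψ * X).trace).re) ∧
        ((ρ * X).trace).re ≤ 0} ∧
    Convex ℝ {X : Matrix (Fin r) (Fin r) ℂ | X.IsHermitian ∧
        (∀ ψ : Fin r → ℂ, star ψ ⬝ᵥ ψ = 1 → 0 ≤ E ψ + ((pureProj ψ * X).trace).re) ∧
        ((ρ * X).trace).re ≤ 0} :=
  ⟨isCompact_dualFeasibleSet hr hρ htrρ fun ψ hψ => (hE ψ hψ).2, convex_dualFeasibleSet ρ E⟩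
end
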